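/- Every computable set I ⊆ ℕ (with I infinite) is a subsequence set for 1-genericity: for every 1-generic G, the subsequence G_I is 1-generic. -/

import Mathlib

open Classical in
/-- Characteristic sequence of a set of naturals. -/
noncomputable def chi (G : Set ℕ) : ℕ → Bool := fun n => decide (n ∈ G)

/-- Initial segment of length `k` of the characteristic sequence of `G`. -/
noncomputable def seg (G : Set ℕ) (k : ℕ) : List Bool := (List.range k).map (chi G)

/-- `G` is 1-generic: for every c.e. set `W` of binary strings, some initial
segment of `G` lies in `W` or has no extension in `W`. -/
def OneGeneric (G : Set ℕ) : Prop :=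
  ∀ W : Set (List Bool), REPred (· ∈ W) →
    ∃ k, seg G k ∈ W ∨ ∀ τ : List Bool, seg G k <+: τ → τ ∉ W

/-- A set of strings is dense if every string has an extension in it. -/
def DenseStrings (W : Set (List Bool)) : Prop := ∀ σ : List Bool, ∃ τ ∈ W, σ <+: τ

/-- `G` is weak-1-generic: `G` meets every dense c.e. set of strings. -/
def WeakOneGeneric (G : Set ℕ) : Prop :=
  ∀ W : Set (List Bool), REPred (· ∈ W) → DenseStrings W → ∃ k, seg G k ∈ W

/-- Principal function of `I` (increasing enumeration). -/
noncomputable def princ (I : Set ℕ) : ℕ → ℕ := Nat.nth (· ∈ I)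

/-- `I` is hyperimmune: infinite and its principal function is majorized by
no computable function. -/
def Hyperimmune (I : Set ℕ) : Prop :=
  I.Infinite ∧ ∀ f : ℕ → ℕ, Computable f → ∃ n, f n < princ I n

/-- The `I`-subsequence `A_I` of `A`, as a set: `A_I(n) = A(P_I(n))`. -/
def subseq (A I : Set ℕ) : Set ℕ := {n | princ I n ∈ A}

/-- The `I`-subsequence of an infinite binary sequence. -/
noncomputable def subseqFun (X : ℕ → Bool) (I : Set ℕ) : ℕ → Bool :=
  fun n => X (princ I n)

def ComputableSet (I : Set ℕ) : Prop := ComputablePred (· ∈ I)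

/-- Partial functions recursive in an oracle `O`. -/
inductive RecursiveInFn (O : ℕ →. ℕ) : (ℕ →. ℕ) → Prop
  | zero : RecursiveInFn O (pure 0)
  | succ : RecursiveInFn O ↑Nat.succ
  | left : RecursiveInFn O ↑fun n : ℕ => n.unpair.1
  | right : RecursiveInFn O ↑fun n : ℕ => n.unpair.2
  | oracle : RecursiveInFn O O
  | pair {f g} : RecursiveInFn O f → RecursiveInFn O g →
      RecursiveInFn O fun n => Nat.pair <$> f n <*> g n
  | comp {f g} : RecursiveInFn O f → RecursiveInFn O g →
      RecursiveInFn O fun n => g n >>= f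
  | prec {f g} : RecursiveInFn O f → RecursiveInFn O g →
      RecursiveInFn O (Nat.unpaired fun a n =>
        n.rec (f a) fun y IH => do { let i ← IH; g (Nat.pair a (Nat.pair y i)) })
  | rfind {f} : RecursiveInFn O f →
      RecursiveInFn O fun a => Nat.rfind fun n => (fun m => m = 0) <$> f (Nat.pair a n)

open Classical in
noncomputable def charFun (A : Set ℕ) : ℕ →. ℕ :=
  fun n => Part.some (if n ∈ A then 1 else 0)

/-- `A` Turing-computes `B`. -/
def TuringComputes (A B : Set ℕ) : Prop := RecursiveInFn (charFun A) (charFun B)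

/-- The halting problem `∅′`. -/
def HaltingProblem : Set ℕ :=
  {n | ((Denumerable.ofNat Nat.Partrec.Code n).eval n).Dom}

/-- `I` is wild. -/
def Wild (I : Set ℕ) : Prop :=
  ¬ComputableSet I ∧ ∃ f : ℕ → ℕ, Computable f ∧ StrictMono f ∧
    (∀ n, (I ∩ Set.Ioo (f n) (f (n + 1))).Nonempty) ∧
    ¬Computable fun n => (I ∩ Set.Ioo (f n) (f (n + 1))).ncard

/-- `I` is tame. -/
def Tame (I : Set ℕ) : Prop :=
  ¬ComputableSet I ∧ ∃ f : ℕ → ℕ, Computable f ∧ StrictMono f ∧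
    (∀ n, (I ∩ Set.Ioo (f n) (f (n + 1))).Nonempty) ∧
    Computable fun n => (I ∩ Set.Ioo (f n) (f (n + 1))).ncard

/-- The string `ρ` meets `S`: some initial segment of `ρ` is in `S`. -/
def MeetsStr (ρ : List Bool) (S : Set (List Bool)) : Prop := ∃ σ ∈ S, σ <+: ρ

/-- The sequence `X` meets `S`: some initial segment of `X` is in `S`. -/
def MeetsSeq (X : ℕ → Bool) (S : Set (List Bool)) : Prop :=
  ∃ k, (List.range k).map X ∈ S

/-- `l, t` are suitable for `S`. -/
def SuitableFor (S : Set (List Bool)) (l : ℕ → ℕ) (t : ℕ → List Bool) : Prop :=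
  l 0 = 0 ∧ (∀ n, l (n + 1) = l n + (t n).length) ∧
    ∀ (X : ℕ → Bool) (n m : ℕ), m ≤ l n →
      MeetsStr ((List.range m).map X ++ t n) S

/-- The collection `D` has property `(*)`. -/
def HasStar (D : ℕ → Set (List Bool)) : Prop :=
  ∀ i, ∃ l t, SuitableFor (D i) l t ∧ ∀ n, ∃ j, D j =
    {s | ∃ (σ τ ρ : List Bool) (m : ℕ), m > n ∧ σ.length = l (2 * m) ∧
      τ = t (2 * m) ∧ ρ = t (2 * m + 1) ∧ s = σ ++ τ ++ ρ}

/-- The `e`-th c.e. set of binary strings. -/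
def ceSet (e : ℕ) : Set (List Bool) :=
  {σ | ((Denumerable.ofNat Nat.Partrec.Code e).eval (Encodable.encode σ)).Dom}

open Classical in
/-- The `I`-subsequence of a finite string. -/
noncomputable def subseqStr (τ : List Bool) (I : Set ℕ) : List Bool :=
  (List.range τ.length).filterMap fun k => if k ∈ I then τ[k]? else none


/-! Since `I` is computable, so is `σ ↦ σ_I` on strings, hence `{σ | σ_I ∈ W}` is c.e. whenever
`W` is. A 1-generic `G` meets or avoids this set along some `seg G k`. Meeting it puts
`seg G_I (count I k)` in `W`; avoiding it is inherited, because, `I` being infinite, every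
extension of `(seg G k)_I` is `τ_I` for some extension `τ` of `seg G k`. -/

theorem Computable.list_filterMap_range {α β : Type*} [Primcodable α] [Primcodable β]
    {f : α → ℕ → Option β} (hf : Computable₂ f) :
    Computable₂ fun a n => (List.range n).filterMap (f a) := by
  have hstep : Computable₂ fun (x : α × ℕ) (p : ℕ × List β) =>
      p.2 ++ Option.casesOn (f x.1 p.1) [] fun b => [b] :=
    Computable.list_append.comp (Computable.snd.comp Computable.snd)
      (Computable.option_casesOn (hf.comp (Computable.fst.comp Computable.fst)
          (Computable.fst.comp Computable.snd)) (Computable.const [])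
        (Computable.list_cons.comp Computable.snd (Computable.const [])).to₂)
  refine (Computable.nat_rec Computable.snd (Computable.const []) hstep).of_eq fun ⟨a, n⟩ => ?_
  induction n with
  | zero => rfl
  | succ n ih =>
    simp only [List.range_succ, List.filterMap_append, ← ih]
    rcases hfn : f a n with _ | b <;> simp [hfn]

theorem computable_subseqStr {I : Set ℕ} (hI : ComputableSet I) :
    Computable fun τ : List Bool => subseqStr τ I := by
  obtain ⟨_, hc⟩ := hI
  have hf : Computable₂ fun (τ : List Bool) (k : ℕ) => cond (decide (k ∈ I)) τ[k]? none :=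
    Computable.cond (hc.comp Computable.snd) Computable.list_getElem? (Computable.const none)
  refine ((Computable.list_filterMap_range hf).comp Computable.id Computable.list_length).of_eq
    fun τ => List.filterMap_congr fun k _ => ?_
  by_cases hk : k ∈ I <;> simp [hk]

theorem Nat.filterMap_range_eq_map_nth {β : Type*} (p : ℕ → Prop) [DecidablePred p]
    (X : ℕ → β) (k : ℕ) :
    (List.range k).filterMap (fun j => if p j then some (X j) else none)
      = (List.range (Nat.count p k)).map (X ∘ Nat.nth p) := by
  induction k with
  | zero => rfl
  | succ k ih =>
    rw [List.range_succ, List.filterMap_append, ih, Nat.count_succ]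
    by_cases hk : p k
    · simp [hk, List.range_succ, Nat.nth_count hk]
    · simp [hk]

section

open Classical

theorem subseqStr_map_range (I : Set ℕ) (X : ℕ → Bool) (k : ℕ) :
    subseqStr ((List.range k).map X) I
      = (List.range (Nat.count (· ∈ I) k)).map (X ∘ princ I) :=
  calc _ = (List.range k).filterMap (fun j => if j ∈ I then some (X j) else none) := by
        rw [subseqStr, List.length_map, List.length_range]
        exact List.filterMap_congr fun j hj => by simp [List.mem_range.1 hj]
    _ = _ := Nat.filterMap_range_eq_map_nth _ X k

theorem subseqStr_seg (G I : Set ℕ) (k : ℕ) :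
    subseqStr (seg G k) I = seg (subseq G I) (Nat.count (· ∈ I) k) :=
  subseqStr_map_range I (chi G) k

theorem exists_prefix_subseqStr_eq {I : Set ℕ} (hI : I.Infinite) {X : ℕ → Bool} {k : ℕ}
    {τ' : List Bool} (h : (List.range (Nat.count (· ∈ I) k)).map (X ∘ princ I) <+: τ') :
    ∃ τ, (List.range k).map X <+: τ ∧ subseqStr τ I = τ' := by
  -- `Y` writes `τ'[n]` at the `n`-th element of `I` and agrees with `X` off `I`.
  set Y : ℕ → Bool := fun j => if j ∈ I then τ'.getD (Nat.count (· ∈ I) j) (X j) else X j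
  have hYX : ∀ j < k, Y j = X j := by
    intro j hj
    by_cases hjI : j ∈ I
    · have hlt : Nat.count (· ∈ I) j
          < ((List.range (Nat.count (· ∈ I) k)).map (X ∘ princ I)).length := by
        simpa using Nat.count_strict_mono (p := (· ∈ I)) hjI hj
      simp only [Y, if_pos hjI, List.getD_eq_getElem _ _ (hlt.trans_le h.length_le),
        ← h.getElem hlt]
      simp [princ, Nat.nth_count hjI]
    · simp [Y, hjI]
  have hkL : k ≤ princ I τ'.length :=
    (Nat.count_le_iff_le_nth (p := (· ∈ I)) hI).1 (by simpa using h.length_le)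
  refine ⟨(List.range (princ I τ'.length)).map Y, ?_, ?_⟩
  · rw [List.map_congr_left fun j hj => (hYX j (List.mem_range.1 hj)).symm]
    exact (List.prefix_iff_eq_take.2 (by simp [hkL])).map Y
  · rw [subseqStr_map_range, princ, Nat.count_nth_of_infinite (p := (· ∈ I)) hI]
    refine List.ext_getElem (by simp) fun i _ hi => ?_
    simp [Y, Nat.nth_mem_of_infinite (p := (· ∈ I)) hI,
      Nat.count_nth_of_infinite (p := (· ∈ I)) hI, List.getElem?_eq_getElem hi]

end

theorem computable_subsequenceSet_for_oneGenericity (I : Set ℕ) (hinf : I.Infinite)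
    (hI : ComputableSet I) (G : Set ℕ) (hG : OneGeneric G) :
    OneGeneric (subseq G I) := by
  classical
  intro W hW
  obtain ⟨k, hk⟩ := hG {σ | subseqStr σ I ∈ W} (hW.comp (computable_subseqStr hI))
  refine ⟨Nat.count (· ∈ I) k, hk.imp (fun hmem => ?_) fun hout τ' hτ' hτ'W => ?_⟩
  · rw [← subseqStr_seg]
    exact hmem
  · obtain ⟨τ, hτ, rfl⟩ := exists_prefix_subseqStr_eq hinf (X := chi G) (k := k) hτ'
    exact hout τ hτ hτ'W
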